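/- arXiv:1004.4016 — 3 statements merged into one kernel-verified Lean document; each statement's English description precedes it below -/
import Mathlib

section
/- Let f : ℝ → ℝ be twice continuously differentiable, H : ℝ → ℝ continuously differentiable, and Υ > 0. Suppose f satisfies f''(t) + 3 H(t) f'(t) + Υ² f(t) = 0 on [a,b] with f(a) = f(b) = 0. Then ∫_a^b f'(t)²/Υ² dt = (∫_a^b f(t)² dt) · (1 − (3/(2Υ²)) · H̄'), where H̄' = (∫_a^b H'(t) f(t)² dt)/(∫_a^b f(t)² dt), assuming ∫_a^b f(t)² dt ≠ 0. -/
open intervalIntegral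

/-!
Multiplying the equation by `f`, the function `f f' + (3/2) H f²` has derivative
`f'² + (3/2) H' f² - Υ² f²`. Integrating over `[a, b]`, where `f` vanishes at both ends, gives
`∫ f'² = Υ² ∫ f² - (3/2) ∫ H' f²`, which is the claim after dividing by `Υ²`.
-/

open Set

theorem hasDerivAt_damped_oscillator_energy {f f' f'' H H' : ℝ → ℝ} {Υ t : ℝ}
    (hf : HasDerivAt f (f' t) t) (hf' : HasDerivAt f' (f'' t) t) (hH : HasDerivAt H (H' t) t)
    (hode : f'' t + 3 * H t * f' t + Υ ^ 2 * f t = 0) :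
    HasDerivAt (fun s ↦ f' s * f s + 3 / 2 * H s * f s ^ 2)
      (f' t ^ 2 + 3 / 2 * (H' t * f t ^ 2) - Υ ^ 2 * f t ^ 2) t := by
  refine ((hf'.mul hf).add ((hH.const_mul (3 / 2 : ℝ)).mul (hf.pow 2))).congr_deriv ?_
  simp only [Pi.pow_apply]
  linear_combination f t * hode

theorem integral_deriv_sq_of_damped_oscillator {f f' f'' H H' : ℝ → ℝ} {Υ a b : ℝ}
    (hf : ∀ t ∈ uIcc a b, HasDerivAt f (f' t) t) (hf' : ∀ t ∈ uIcc a b, HasDerivAt f' (f'' t) t)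
    (hH : ∀ t ∈ uIcc a b, HasDerivAt H (H' t) t)
    (hf'c : ContinuousOn f' (uIcc a b)) (hH'c : ContinuousOn H' (uIcc a b))
    (hode : ∀ t ∈ uIcc a b, f'' t + 3 * H t * f' t + Υ ^ 2 * f t = 0)
    (hfa : f a = 0) (hfb : f b = 0) :
    ∫ t in a..b, f' t ^ 2 =
      Υ ^ 2 * (∫ t in a..b, f t ^ 2) - 3 / 2 * ∫ t in a..b, H' t * f t ^ 2 := by
  have hfc : ContinuousOn f (uIcc a b) := HasDerivAt.continuousOn hf
  have hf'sq : IntervalIntegrable (fun t ↦ f' t ^ 2) MeasureTheory.volume a b :=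
    (hf'c.pow 2).intervalIntegrable
  have hH'fsq : IntervalIntegrable (fun t ↦ H' t * f t ^ 2) MeasureTheory.volume a b :=
    (hH'c.mul (hfc.pow 2)).intervalIntegrable
  have hfsq : IntervalIntegrable (fun t ↦ f t ^ 2) MeasureTheory.volume a b :=
    (hfc.pow 2).intervalIntegrable
  have hFTC := integral_eq_sub_of_hasDerivAt
    (fun t ht ↦ hasDerivAt_damped_oscillator_energy (hf t ht) (hf' t ht) (hH t ht) (hode t ht))
    ((hf'sq.add (hH'fsq.const_mul (3 / 2))).sub (hfsq.const_mul (Υ ^ 2)))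
  rw [integral_sub (hf'sq.add (hH'fsq.const_mul _)) (hfsq.const_mul _),
    integral_add hf'sq (hH'fsq.const_mul _), integral_const_mul, integral_const_mul, hfa, hfb] at hFTC
  linear_combination hFTC

/-- Key integration-by-parts identity: for a solution of the damped oscillator
`f'' + 3 H f' + Υ² f = 0` on `[a,b]` with `f(a) = f(b) = 0`,
`∫ f'²/Υ² = (∫ f²)(1 − (3/(2Υ²)) H̄')` where `H̄' = (∫ H' f²)/(∫ f²)`. -/
theorem stmt0 (f H : ℝ → ℝ) (Υ a b : ℝ) (hab : a ≤ b)
    (hf : ContDiff ℝ 2 f) (hH : ContDiff ℝ 1 H) (hΥ : 0 < Υ)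
    (hode : ∀ t ∈ Set.Icc a b,
      deriv (deriv f) t + 3 * H t * deriv f t + Υ ^ 2 * f t = 0)
    (hfa : f a = 0) (hfb : f b = 0)
    (hne : (∫ t in a..b, f t ^ 2) ≠ 0) :
    (∫ t in a..b, (deriv f t) ^ 2 / Υ ^ 2) =
      (∫ t in a..b, f t ^ 2) *
        (1 - (3 / (2 * Υ ^ 2)) *
          ((∫ t in a..b, deriv H t * f t ^ 2) / (∫ t in a..b, f t ^ 2))) := by
  have hasDerivAt_deriv {g : ℝ → ℝ} (hg : ContDiff ℝ 1 g) (t : ℝ) : HasDerivAt g (deriv g t) t :=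
    (hg.differentiable one_ne_zero t).hasDerivAt
  have hf' : ContDiff ℝ 1 (deriv f) := (contDiff_succ_iff_deriv.mp hf).2.2
  have key := integral_deriv_sq_of_damped_oscillator
    (fun t _ ↦ hasDerivAt_deriv (hf.of_le one_le_two) t) (fun t _ ↦ hasDerivAt_deriv hf' t)
    (fun t _ ↦ hasDerivAt_deriv hH t) hf'.continuous.continuousOn
    (hH.continuous_deriv le_rfl).continuousOn (by rwa [uIcc_of_le hab]) hfa hfb
  rw [integral_div, key]
  field_simp
end

section
/- Let f : ℝ → ℝ be twice continuously differentiable, H : ℝ → ℝ continuously differentiable, Υ > 0, and suppose f'' + 3Hf' + Υ²f = 0 on [a,b] with f(a)=f(b)=0 and ∫_a^b f² ≠ 0. Define ρ(t) = f(t)² + f'(t)²/Υ², P(t) = −f(t)² + f'(t)²/Υ², their averages ρ̄ = (1/(b−a))∫_a^b ρ, P̄ = (1/(b−a))∫_a^b P, and ε = −3H̄'/(4Υ²) with H̄' = (∫_a^b H' f²)/(∫_a^b f²). If ε ≠ −1, then P̄/ρ̄ = ε/(1+ε). -/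
/-!
Multiplying the equation by `f` and integrating over `[a, b]`, integration by parts (with no
boundary terms, as `f a = f b = 0`) turns `∫ f'' f` into `-∫ f'²` and `∫ 3 H f f' = ∫ (3/2) H (f²)'`
into `-(3/2) ∫ H' f²`. This gives the virial identity `Υ² ∫ f² = ∫ f'² + (3/2) ∫ H' f²`, i.e.
`∫ f'² / Υ² = (1 + 2ε) ∫ f²`, so `∫ ρ = 2(1 + ε) ∫ f²` and `∫ P = 2ε ∫ f²`.
-/

open intervalIntegral

theorem integral_mul_deriv_eq_neg_of_eq_zero {u v : ℝ → ℝ} {a b : ℝ}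
    (hu : ContDiff ℝ 1 u) (hv : ContDiff ℝ 1 v) (ha : v a = 0) (hb : v b = 0) :
    ∫ t in a..b, u t * deriv v t = -∫ t in a..b, deriv u t * v t := by
  rw [integral_mul_deriv_eq_deriv_mul
    (fun t _ ↦ (hu.differentiable one_ne_zero t).hasDerivAt)
    (fun t _ ↦ (hv.differentiable one_ne_zero t).hasDerivAt)
    (hu.continuous_deriv_one.intervalIntegrable a b)
    (hv.continuous_deriv_one.intervalIntegrable a b), ha, hb]
  ring

theorem integral_deriv_sq_of_eq_zero {f : ℝ → ℝ} {a b : ℝ}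
    (hf : ContDiff ℝ 2 f) (ha : f a = 0) (hb : f b = 0) :
    ∫ t in a..b, deriv f t ^ 2 = -∫ t in a..b, deriv (deriv f) t * f t := by
  simpa only [sq] using
    integral_mul_deriv_eq_neg_of_eq_zero hf.deriv' (hf.of_le one_le_two) ha hb

theorem integral_mul_mul_deriv_of_eq_zero {f g : ℝ → ℝ} {a b : ℝ}
    (hf : ContDiff ℝ 1 f) (hg : ContDiff ℝ 1 g) (ha : f a = 0) (hb : f b = 0) :
    ∫ t in a..b, g t * (f t * deriv f t) = -(1 / 2) * ∫ t in a..b, deriv g t * f t ^ 2 := by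
  have hsq : ∀ t, deriv (fun t ↦ f t ^ 2) t = 2 * (f t * deriv f t) := fun t ↦ by
    rw [deriv_fun_pow (hf.differentiable one_ne_zero t)]
    ring
  have h := integral_mul_deriv_eq_neg_of_eq_zero (a := a) (b := b) hg (hf.pow 2)
    (by simp [ha]) (by simp [hb])
  simp only [hsq, mul_left_comm _ (2 : ℝ), integral_const_mul] at h
  linarith

theorem damped_oscillator_virial {f H : ℝ → ℝ} {Υ a b : ℝ}
    (hf : ContDiff ℝ 2 f) (hH : ContDiff ℝ 1 H)
    (hode : ∀ t ∈ Set.uIcc a b,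
      deriv (deriv f) t + 3 * H t * deriv f t + Υ ^ 2 * f t = 0)
    (ha : f a = 0) (hb : f b = 0) :
    Υ ^ 2 * ∫ t in a..b, f t ^ 2 =
      (∫ t in a..b, deriv f t ^ 2) + 3 / 2 * ∫ t in a..b, deriv H t * f t ^ 2 := by
  have hf1 : ContDiff ℝ 1 f := hf.of_le one_le_two
  have hcf := hf1.continuous
  have hcf' := hf1.continuous_deriv_one
  have hcf'' := hf.deriv'.continuous_deriv_one
  have hcH := hH.continuous
  have hzero : (∫ t in a..b, deriv (deriv f) t * f t) +
      3 * (∫ t in a..b, H t * (f t * deriv f t)) + Υ ^ 2 * ∫ t in a..b, f t ^ 2 = 0 := by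
    rw [← integral_const_mul, ← integral_const_mul, ← integral_add, ← integral_add]
    · rw [integral_congr (g := fun _ ↦ 0) fun t ht ↦ by
        simp only
        linear_combination f t * hode t ht]
      exact integral_zero
    all_goals exact Continuous.intervalIntegrable (by fun_prop) _ _
  rw [integral_deriv_sq_of_eq_zero hf ha hb]
  rw [integral_mul_mul_deriv_of_eq_zero hf1 hH ha hb] at hzero
  linarith

theorem pressure_div_density_of_virial {I J K Υ c ε : ℝ} (hI : I ≠ 0) (hΥ : Υ ≠ 0) (hc : c ≠ 0)
    (hvir : Υ ^ 2 * I = J + 3 / 2 * K) (hε : ε = -(3 * (K / I)) / (4 * Υ ^ 2))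
    (hε1 : ε ≠ -1) :
    c * (-I + J / Υ ^ 2) / (c * (I + J / Υ ^ 2)) = ε / (1 + ε) := by
  have hK : 3 * K = -(4 * Υ ^ 2 * I * ε) := by
    rw [hε]
    field_simp
  have hJ : J / Υ ^ 2 = I * (1 + 2 * ε) := by
    rw [div_eq_iff (pow_ne_zero 2 hΥ)]
    linear_combination -hvir - hK / 2
  have h1ε : 1 + ε ≠ 0 := fun h ↦ hε1 (by linarith)
  have hρ : I + I * (1 + 2 * ε) ≠ 0 := by
    rw [show I + I * (1 + 2 * ε) = 2 * I * (1 + ε) by ring]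
    positivity
  rw [hJ, mul_div_mul_left _ _ hc, div_eq_div_iff hρ h1ε]
  ring

/-- Theorem 1 of the paper (coldness of scalar field dark matter):
for a solution of `f'' + 3Hf' + Υ²f = 0` on `[a,b]` with `f(a)=f(b)=0`,
with energy density `ρ = f² + f'²/Υ²` and pressure `P = −f² + f'²/Υ²`,
the averages satisfy `P̄/ρ̄ = ε/(1+ε)` where `ε = −3H̄'/(4Υ²)`. -/
theorem stmt1 (f H : ℝ → ℝ) (Υ a b : ℝ) (hab : a ≤ b)
    (hf : ContDiff ℝ 2 f) (hH : ContDiff ℝ 1 H) (hΥ : 0 < Υ)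
    (hode : ∀ t ∈ Set.Icc a b,
      deriv (deriv f) t + 3 * H t * deriv f t + Υ ^ 2 * f t = 0)
    (hfa : f a = 0) (hfb : f b = 0)
    (hne : (∫ t in a..b, f t ^ 2) ≠ 0)
    (ρ P : ℝ → ℝ)
    (hρ : ∀ t, ρ t = f t ^ 2 + (deriv f t) ^ 2 / Υ ^ 2)
    (hP : ∀ t, P t = -(f t ^ 2) + (deriv f t) ^ 2 / Υ ^ 2)
    (ρbar Pbar Hbar ε : ℝ)
    (hρbar : ρbar = (1 / (b - a)) * ∫ t in a..b, ρ t)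
    (hPbar : Pbar = (1 / (b - a)) * ∫ t in a..b, P t)
    (hHbar : Hbar = (∫ t in a..b, deriv H t * f t ^ 2) / (∫ t in a..b, f t ^ 2))
    (hε : ε = -(3 * Hbar) / (4 * Υ ^ 2))
    (hεne : ε ≠ -1) :
    Pbar / ρbar = ε / (1 + ε) := by
  have hba : b - a ≠ 0 := by
    rintro h
    rw [sub_eq_zero.mp h] at hne
    exact hne integral_same
  have hvir := damped_oscillator_virial hf hH
    (fun t ht ↦ hode t (Set.uIcc_of_le hab ▸ ht)) hfa hfb
  have hcf := hf.continuous
  have hcf' := hf.continuous_deriv one_le_two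
  have hρint : ∫ t in a..b, ρ t =
      (∫ t in a..b, f t ^ 2) + (∫ t in a..b, deriv f t ^ 2) / Υ ^ 2 := by
    simp_rw [hρ]
    rw [integral_add, integral_div]
    all_goals exact Continuous.intervalIntegrable (by fun_prop) _ _
  have hPint : ∫ t in a..b, P t =
      -(∫ t in a..b, f t ^ 2) + (∫ t in a..b, deriv f t ^ 2) / Υ ^ 2 := by
    simp_rw [hP]
    rw [integral_add, integral_neg, integral_div]
    all_goals exact Continuous.intervalIntegrable (by fun_prop) _ _
  rw [hρbar, hPbar, hρint, hPint]
  exact pressure_div_density_of_virial hne hΥ.ne' (one_div_ne_zero hba) hvir (hHbar ▸ hε) hεne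
end

section
/- For a smooth function f(t) on an FLRW spacetime −dt² + a(t)² ds_κ² depending only on t, the metric Laplacian satisfies □f = −f''(t) − 3H(t)f'(t), where H(t) = a'(t)/a(t). In particular, f satisfies the Klein-Gordon equation □f = Υ²f if and only if f'' + 3Hf' + Υ²f = 0. -/
/-! With `|g|^{1/2} = a³ · (spatial volume factor)` and `g^{tt} = -1`, the box of a function of `t`
alone is `a⁻³ ∂ₜ(-a³ f')`; the product rule turns this into `-f'' - 3 (a'/a) f'`. -/

theorem inv_pow_mul_deriv_neg_pow_mul {a g : ℝ → ℝ} {t : ℝ} (n : ℕ)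
    (ha : DifferentiableAt ℝ a t) (hg : DifferentiableAt ℝ g t) (h0 : a t ≠ 0) :
    (a t ^ n)⁻¹ * deriv (fun s => -(a s ^ n * g s)) t =
      -deriv g t - n * (deriv a t / a t) * g t := by
  rw [deriv.fun_neg, deriv_fun_mul (ha.fun_pow n) hg, deriv_fun_pow ha]
  rcases n with _ | n
  · simp
  · field_simp
    push_cast
    ring

/-- For a function `f` of `t` alone on the FLRW spacetime `−dt² + a(t)² ds_κ²`,
the metric Laplacian `□f = |g|^{-1/2} ∂ᵢ(|g|^{1/2} gⁱʲ ∂ⱼ f) = a⁻³ ∂ₜ(−a³ f')`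
equals `−f'' − 3Hf'` with `H = a'/a`; hence `□f = Υ²f` iff
`f'' + 3Hf' + Υ²f = 0`. -/
theorem stmt3 (a f : ℝ → ℝ) (Υ : ℝ)
    (ha : ContDiff ℝ 1 a) (hf : ContDiff ℝ 2 f) (hapos : ∀ t, 0 < a t) (t : ℝ) :
    ((a t) ^ 3)⁻¹ * deriv (fun s => -((a s) ^ 3 * deriv f s)) t =
      -(deriv (deriv f) t) - 3 * (deriv a t / a t) * deriv f t ∧
    (((a t) ^ 3)⁻¹ * deriv (fun s => -((a s) ^ 3 * deriv f s)) t = Υ ^ 2 * f t ↔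
      deriv (deriv f) t + 3 * (deriv a t / a t) * deriv f t + Υ ^ 2 * f t = 0) := by
  have hbox := inv_pow_mul_deriv_neg_pow_mul 3 (ha.differentiable one_ne_zero t)
    (hf.differentiable_deriv_two t) (hapos t).ne'
  push_cast at hbox
  refine ⟨hbox, ?_⟩
  rw [hbox]
  constructor <;> intro h <;> linarith
end
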